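/- A gluing tree of a polygon folding has at most four leaves that are fold points, and each leaf of the gluing tree has curvature at least π unless it is a polygon vertex with interior angle greater than π; consequently the gluing tree of any Aleksandrov gluing has at most four leaves whose glued angle is at least π. -/

import Mathlib

open Real Set

noncomputable section

/-- Abstract model of a polygon via its boundary: the circle `ℝ / Lℤ` of perimeter `L`
(parametrised by arc length), a finite set of vertices, and an interior-angle function
which equals `π` at every non-vertex boundary point. -/
structure AbstractPolygon where
  L : ℝ
  Lpos : 0 < L
  V : Set (AddCircle L)
  Vfin : V.Finite
  angle : AddCircle L → ℝ
  angle_pos : ∀ p, 0 < angle p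
  angle_lt : ∀ p, angle p < 2 * π
  nonvertex_angle : ∀ p, p ∉ V → angle p = π

/-- Convexity: every interior angle is at most `π`. -/
def AbstractPolygon.IsConvex (P : AbstractPolygon) : Prop := ∀ p, P.angle p ≤ π

/-- The set of boundary points identified with `p` by the gluing `s`. -/
def glueClass {L : ℝ} (s : Setoid (AddCircle L)) (p : AddCircle L) : Set (AddCircle L) :=
  {q | s.r p q}

/-- The total face angle glued together at the identified point of `p`. -/
def gluedAngle (P : AbstractPolygon) (s : Setoid (AddCircle P.L)) (p : AddCircle P.L) : ℝ :=
  ∑ᶠ q ∈ glueClass s p, P.angle q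

/-- A gluing is length preserving: each identification extends locally by arc length
(on each side, possibly reversing orientation). -/
def LengthPreserving {L : ℝ} (s : Setoid (AddCircle L)) : Prop :=
  ∀ p q : AddCircle L, s.r p q →
    ∃ ε > (0 : ℝ),
      (∀ t : ℝ, 0 < t → t < ε →
        s.r (p + (t : AddCircle L)) (q + (t : AddCircle L)) ∨
        s.r (p + (t : AddCircle L)) (q - (t : AddCircle L))) ∧
      (∀ t : ℝ, 0 < t → t < ε →
        s.r (p - (t : AddCircle L)) (q + (t : AddCircle L)) ∨
        s.r (p - (t : AddCircle L)) (q - (t : AddCircle L)))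

/-- The two-complex obtained from the gluing: the polygon is a topological disk,
modelled as the cone over its boundary circle, and its boundary is glued via `s`. -/
def complexSetoid (L : ℝ) (s : Setoid (AddCircle L)) :
    Setoid (AddCircle L × unitInterval) :=
  Relation.EqvGen.setoid (fun a b =>
    (a.2 = 1 ∧ b.2 = 1 ∧ s.r a.1 b.1) ∨ (a.2 = 0 ∧ b.2 = 0))

/-- Aleksandrov's second condition: the glued complex is homeomorphic to the 2-sphere. -/
def SphereComplex (P : AbstractPolygon) (s : Setoid (AddCircle P.L)) : Prop :=
  Nonempty (Quotient (complexSetoid P.L s) ≃ₜ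
    Metric.sphere (0 : EuclideanSpace ℝ (Fin 3)) 1)

/-- An Aleksandrov gluing: a length-preserving self-identification of the boundary,
gluing at most `2π` of face angle at every point, whose complex is a sphere. -/
structure IsAleksandrovGluing (P : AbstractPolygon) (s : Setoid (AddCircle P.L)) : Prop where
  length_preserving : LengthPreserving s
  classes_finite : ∀ p, (glueClass s p).Finite
  angle_le : ∀ p, gluedAngle P s p ≤ 2 * π
  sphere : SphereComplex P s

/-- A fold point: a non-vertex boundary point (interior of an edge) glued only to itself. -/
def IsFoldPoint (P : AbstractPolygon) (s : Setoid (AddCircle P.L)) (p : AddCircle P.L) : Prop :=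
  p ∉ P.V ∧ glueClass s p = {p}

/-- A system of representatives, one from each equivalence class of the gluing carrying
nonzero curvature (total glued angle `≠ 2π`). -/
def IsCurvatureSystem (P : AbstractPolygon) (s : Setoid (AddCircle P.L))
    (S : Finset (AddCircle P.L)) : Prop :=
  (∀ p ∈ S, ∀ q ∈ S, s.r p q → p = q) ∧
  (∀ p, gluedAngle P s p ≠ 2 * π → ∃ q ∈ S, s.r p q)

/-- Discrete Gauss–Bonnet for the gluing: the total angle deficit (curvature)
over all identified points equals `4π`. -/
def GaussBonnet (P : AbstractPolygon) (s : Setoid (AddCircle P.L))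
    (S : Finset (AddCircle P.L)) : Prop :=
  IsCurvatureSystem P s S ∧ (∑ p ∈ S, (2 * π - gluedAngle P s p)) = 4 * π

/-- A leaf of the gluing tree: an identified point at which the boundary folds back on
itself, i.e. the two sides of `p` are glued to each other near `p`. -/
def IsLeafClass {L : ℝ} (s : Setoid (AddCircle L)) (p : AddCircle L) : Prop :=
  ∃ ε > (0 : ℝ), ∀ t : ℝ, 0 < t → t < ε →
    s.r (p + (t : AddCircle L)) (p - (t : AddCircle L))


section helpers

variable {L : ℝ}

lemma fiber_countable (L : ℝ) (c : AddCircle L) :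
    {t : ℝ | (t : AddCircle L) = c}.Countable := by
  obtain ⟨t₀, rfl⟩ : ∃ t₀ : ℝ, (t₀ : AddCircle L) = c := Quotient.exists_rep c
  have hsub : {t : ℝ | (t : AddCircle L) = (t₀ : AddCircle L)} ⊆
      Set.range (fun n : ℤ => t₀ + n • L) := by
    intro t ht
    have h0 : ((t - t₀ : ℝ) : AddCircle L) = 0 := by
      rw [AddCircle.coe_sub, ht, sub_self]
    obtain ⟨n, hn⟩ := (AddCircle.coe_eq_zero_iff L).mp h0
    exact ⟨n, by simp only []; linarith [hn]⟩
  exact (Set.countable_range _).mono hsub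

lemma fiber2_countable (L : ℝ) (c : AddCircle L) :
    {t : ℝ | ((2 * t : ℝ) : AddCircle L) = c}.Countable := by
  have : {t : ℝ | ((2 * t : ℝ) : AddCircle L) = c} ⊆
      (fun u : ℝ => u / 2) '' {u : ℝ | (u : AddCircle L) = c} := by
    intro t ht
    exact ⟨2 * t, ht, by ring⟩
  exact ((fiber_countable L c).image _).mono this

lemma nonempty_good (a b : ℝ) (hab : a < b) {B : Set ℝ} (hB : B.Countable) :
    ∃ t ∈ Set.Ioo a b, t ∉ B := by
  by_contra hcon
  push_neg at hcon
  have hsub : Set.Ioo a b ⊆ B := fun t ht => hcon t ht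
  have : (Set.Ioo a b).Countable := hB.mono hsub
  rw [← Cardinal.le_aleph0_iff_set_countable, Cardinal.mk_Ioo_real hab] at this
  exact absurd (this.trans_lt Cardinal.aleph0_lt_continuum) (lt_irrefl _)

lemma dense_good {a b : ℝ} (hab : a < b) {B : Set ℝ} (hB : B.Countable) :
    Set.Icc a b ⊆ closure (Set.Ioo a b \ B) := by
  intro x hx
  rw [_root_.mem_closure_iff]
  intro U hU hxU
  obtain ⟨η, hη, hball⟩ := Metric.isOpen_iff.mp hU x hxU
  set a' := max a (x - η)
  set b' := min b (x + η)
  obtain ⟨hx1, hx2⟩ := hx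
  have ha'b' : a' < b' := by
    simp only [a', b', lt_min_iff, max_lt_iff]
    refine ⟨⟨?_, ?_⟩, ?_, ?_⟩ <;> linarith
  obtain ⟨t, ht, htB⟩ := nonempty_good a' b' ha'b' hB
  refine ⟨t, ?_, ⟨⟨lt_of_le_of_lt (le_max_left _ _) ht.1,
    lt_of_lt_of_le ht.2 (min_le_left _ _)⟩, htB⟩⟩
  apply hball
  rw [Real.ball_eq_Ioo]
  exact ⟨lt_of_le_of_lt (le_max_right _ _) ht.1, lt_of_lt_of_le ht.2 (min_le_right _ _)⟩

/-- A closed set containing a co-countable subset of an open interval contains the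
closed interval. -/
lemma closed_of_cocountable {Z : Set ℝ} (hZ : IsClosed Z) {a b : ℝ} (hab : a < b)
    {B : Set ℝ} (hB : B.Countable)
    (hsub : ∀ x ∈ Set.Ioo a b, x ∉ B → x ∈ Z) : Set.Icc a b ⊆ Z := by
  intro x hx
  have := dense_good hab hB hx
  rw [← hZ.closure_eq]
  refine closure_mono ?_ this
  intro y hy
  exact hsub y hy.1 hy.2

lemma coe_ne_zero_of_lt (hL : 0 < L) {x : ℝ} (h1 : 0 < x) (h2 : x < L) :
    (x : AddCircle L) ≠ 0 := by
  intro hc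
  obtain ⟨n, hn⟩ := (AddCircle.coe_eq_zero_iff L).mp hc
  rw [zsmul_eq_mul] at hn
  rcases lt_trichotomy n 0 with hn0 | hn0 | hn0
  · have hn1 : n ≤ -1 := by omega
    have : (n : ℝ) ≤ -1 := by exact_mod_cast hn1
    nlinarith
  · subst hn0; simp at hn; linarith
  · have h1n : (1 : ℝ) ≤ (n : ℝ) := by exact_mod_cast hn0
    nlinarith

end helpers

section main

variable (P : AbstractPolygon) (s : Setoid (AddCircle P.L))

/-- Points at level 1 of the complex are related iff they are `s`-related. -/
lemma level_one_rel {a b : AddCircle P.L}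
    (hrel : (complexSetoid P.L s).r (a, (1 : unitInterval)) (b, (1 : unitInterval))) :
    s.r a b := by
  have h10 : (1 : unitInterval) ≠ 0 := by
    intro hc
    have := congrArg Subtype.val hc
    norm_num at this
  have key : ∀ x y : AddCircle P.L × unitInterval,
      Relation.EqvGen (fun a b =>
        (a.2 = 1 ∧ b.2 = 1 ∧ s.r a.1 b.1) ∨ (a.2 = 0 ∧ b.2 = 0)) x y →
      ((x.2 = 1 ∧ y.2 = 1 ∧ s.r x.1 y.1) ∨ (x.2 = 0 ∧ y.2 = 0) ∨ x = y) := by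
    intro x y hxy
    induction hxy with
    | rel a b hab =>
      rcases hab with h | h
      · exact Or.inl h
      · exact Or.inr (Or.inl h)
    | refl a => exact Or.inr (Or.inr rfl)
    | symm a b _ ih =>
      rcases ih with ⟨h1, h2, h3⟩ | h | rfl
      · exact Or.inl ⟨h2, h1, s.iseqv.symm h3⟩
      · exact Or.inr (Or.inl ⟨h.2, h.1⟩)
      · exact Or.inr (Or.inr rfl)
    | trans a b c _ _ ih1 ih2 =>
      rcases ih1 with ⟨h1, h2, h3⟩ | ⟨h1, h2⟩ | rfl
      · rcases ih2 with ⟨g1, g2, g3⟩ | ⟨g1, g2⟩ | rfl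
        · exact Or.inl ⟨h1, g2, s.iseqv.trans h3 g3⟩
        · exact absurd (h2.symm.trans g1) h10
        · exact Or.inl ⟨h1, h2, h3⟩
      · rcases ih2 with ⟨g1, g2, g3⟩ | ⟨g1, g2⟩ | rfl
        · exact absurd (g1.symm.trans h2) h10
        · exact Or.inr (Or.inl ⟨h1, g2⟩)
        · exact Or.inr (Or.inl ⟨h1, h2⟩)
      · rcases ih2 with g | g | rfl
        · exact Or.inl g
        · exact Or.inr (Or.inl g)
        · exact Or.inr (Or.inr rfl)
  have hk := key _ _ hrel
  rcases hk with ⟨_, _, h3⟩ | hz | heq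
  · exact h3
  · exact absurd hz.1 h10
  · have hab : a = b := congrArg Prod.fst heq
    exact hab ▸ s.iseqv.refl a

/-- From the sphere condition, the relation is closed. -/
lemma sGraph_closed (h : IsAleksandrovGluing P s) :
    IsClosed {x : AddCircle P.L × AddCircle P.L | s.r x.1 x.2} := by
  obtain ⟨e⟩ := h.sphere
  haveI : T2Space (Quotient (complexSetoid P.L s)) := e.isEmbedding.t2Space
  have hdiag : IsClosed (Set.diagonal (Quotient (complexSetoid P.L s))) :=
    isClosed_diagonal
  let f : AddCircle P.L → Quotient (complexSetoid P.L s) :=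
    fun a => Quotient.mk (complexSetoid P.L s) (a, (1 : unitInterval))
  have hf : Continuous f := by
    apply Continuous.comp
    · exact continuous_quot_mk
    · exact continuous_id.prodMk continuous_const
  have key : {x : AddCircle P.L × AddCircle P.L | s.r x.1 x.2} =
      (fun x : AddCircle P.L × AddCircle P.L => (f x.1, f x.2)) ⁻¹'
        (Set.diagonal (Quotient (complexSetoid P.L s))) := by
    ext ⟨a, b⟩
    simp only [Set.mem_setOf_eq, Set.mem_preimage, Set.mem_diagonal_iff]
    constructor
    · intro hr
      exact Quotient.sound (Relation.EqvGen.rel _ _ (Or.inl ⟨rfl, rfl, hr⟩))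
    · intro heq
      exact level_one_rel P s (Quotient.exact heq)
  rw [key]
  exact hdiag.preimage ((hf.comp continuous_fst).prodMk (hf.comp continuous_snd))

/-- Three distinct pairwise-glued non-vertex points are impossible. -/
lemma three_lemma (h : IsAleksandrovGluing P s) {x y z : AddCircle P.L}
    (hxy : s.r x y) (hxz : s.r x z)
    (dxy : x ≠ y) (dxz : x ≠ z) (dyz : y ≠ z)
    (vx : x ∉ P.V) (vy : y ∉ P.V) (vz : z ∉ P.V) : False := by
  have hfin := h.classes_finite x
  have hglued : gluedAngle P s x = ∑ q ∈ hfin.toFinset, P.angle q :=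
    finsum_mem_eq_finite_toFinset_sum _ hfin
  have hmem : ({x, y, z} : Finset (AddCircle P.L)) ⊆ hfin.toFinset := by
    intro q hq
    simp only [Finset.mem_insert, Finset.mem_singleton] at hq
    rw [Set.Finite.mem_toFinset]
    rcases hq with rfl | rfl | rfl
    · exact s.iseqv.refl _
    · exact hxy
    · exact hxz
  have hsum : (∑ q ∈ ({x, y, z} : Finset (AddCircle P.L)), P.angle q) ≤
      ∑ q ∈ hfin.toFinset, P.angle q := by
    apply Finset.sum_le_sum_of_subset_of_nonneg hmem
    intro i _ _
    exact (P.angle_pos i).le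
  have hxyz : (∑ q ∈ ({x, y, z} : Finset (AddCircle P.L)), P.angle q) = 3 * π := by
    rw [Finset.sum_insert (by simp [dxy, dxz]), Finset.sum_insert (by simp [dyz]),
      Finset.sum_singleton, P.nonvertex_angle x vx, P.nonvertex_angle y vy,
      P.nonvertex_angle z vz]
    ring
  have hle := h.angle_le x
  rw [hglued] at hle
  rw [hxyz] at hsum
  nlinarith [Real.pi_pos]

end main

section core

variable (P : AbstractPolygon) (s : Setoid (AddCircle P.L))

lemma vertex_bad_countable_add (c : AddCircle P.L) :
    {u : ℝ | c + (u : AddCircle P.L) ∈ P.V}.Countable := by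
  have hsub : {u : ℝ | c + (u : AddCircle P.L) ∈ P.V} ⊆
      ⋃ v ∈ P.V, {u : ℝ | (u : AddCircle P.L) = v - c} := by
    intro u hu
    exact Set.mem_biUnion hu (by rw [Set.mem_setOf_eq, eq_sub_iff_add_eq, add_comm])
  exact (Set.Countable.biUnion P.Vfin.countable fun v _ => fiber_countable P.L _).mono hsub

lemma vertex_bad_countable_sub (c : AddCircle P.L) :
    {u : ℝ | c - (u : AddCircle P.L) ∈ P.V}.Countable := by
  have hsub : {u : ℝ | c - (u : AddCircle P.L) ∈ P.V} ⊆
      ⋃ v ∈ P.V, {u : ℝ | (u : AddCircle P.L) = c - v} := by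
    intro u hu
    refine Set.mem_biUnion hu ?_
    rw [Set.mem_setOf_eq, eq_sub_iff_add_eq]
    abel
  exact (Set.Countable.biUnion P.Vfin.countable fun v _ => fiber_countable P.L _).mono hsub

/-- Cancellation helpers. -/
lemma add_coe_inj {c : AddCircle P.L} {a b : ℝ}
    (hc : c + (a : AddCircle P.L) = c + (b : AddCircle P.L)) :
    ((a - b : ℝ) : AddCircle P.L) = 0 := by
  rw [AddCircle.coe_sub, sub_eq_zero]
  exact add_left_cancel hc

lemma sub_coe_eq_add_coe {c : AddCircle P.L} {a b : ℝ}
    (hc : c - (a : AddCircle P.L) = c + (b : AddCircle P.L)) :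
    ((a + b : ℝ) : AddCircle P.L) = 0 := by
  rw [AddCircle.coe_add]
  have h1 : -(a : AddCircle P.L) = (b : AddCircle P.L) := by
    apply add_left_cancel (a := c)
    rw [← sub_eq_add_neg]
    exact hc
  rw [← h1]
  abel

end core

section core2

variable (P : AbstractPolygon) (s : Setoid (AddCircle P.L))

lemma leaf_reflect (h : IsAleksandrovGluing P s) {p : AddCircle P.L}
    (hp : IsLeafClass s p) :
    ∀ t : ℝ, s.r (p + (t : AddCircle P.L)) (p - (t : AddCircle P.L)) := by
  obtain ⟨ε, hε, hfold⟩ := hp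
  have hL : (0:ℝ) < P.L := P.Lpos
  set Z : Set ℝ :=
    {t : ℝ | s.r (p + (t : AddCircle P.L)) (p - (t : AddCircle P.L))} with hZdef
  have hZclosed : IsClosed Z := by
    have hgraph := sGraph_closed P s h
    have hcoe : Continuous ((↑) : ℝ → AddCircle P.L) := AddCircle.continuous_mk' P.L
    have hcont : Continuous fun t : ℝ =>
        ((p + (t : AddCircle P.L), p - (t : AddCircle P.L)) :
          AddCircle P.L × AddCircle P.L) :=
      (continuous_const.add hcoe).prodMk (continuous_const.sub hcoe)
    exact hgraph.preimage hcont
  have h0Z : (0:ℝ) ∈ Z := by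
    simp only [hZdef, Set.mem_setOf_eq]
    norm_num
  set SS : Set ℝ := {t : ℝ | t ∈ Set.Icc (0:ℝ) (P.L/2) ∧ Set.Icc 0 t ⊆ Z} with hSSdef
  have hS0 : (0:ℝ) ∈ SS := by
    refine ⟨⟨le_refl 0, by positivity⟩, ?_⟩
    intro x hx
    have hx0 : x = 0 := le_antisymm hx.2 hx.1
    rw [hx0]; exact h0Z
  have hbdd : BddAbove SS := ⟨P.L/2, fun t ht => ht.1.2⟩
  have hne : SS.Nonempty := ⟨0, hS0⟩
  set T := sSup SS with hTdef
  have hT0 : 0 ≤ T := le_csSup hbdd hS0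
  have hTle : T ≤ P.L / 2 := csSup_le hne fun t ht => ht.1.2
  have hSZ : SS ⊆ Z := fun t ht => ht.2 ⟨ht.1.1, le_refl t⟩
  have hIccZ : Set.Icc (0:ℝ) T ⊆ Z := by
    intro x hx
    rcases eq_or_lt_of_le hx.2 with heq | hlt
    · have h1 : T ∈ closure SS := csSup_mem_closure hne hbdd
      have h2 : closure SS ⊆ Z := by
        rw [← hZclosed.closure_eq]; exact closure_mono hSZ
      exact heq ▸ h2 h1
    · obtain ⟨t', ht'S, hxt'⟩ := exists_lt_of_lt_csSup hne hlt
      exact ht'S.2 ⟨hx.1, hxt'.le⟩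
  have hTpos : 0 < T := by
    set m := min (ε/2) (P.L/2) with hm
    have hmpos : 0 < m := lt_min (by linarith) (by positivity)
    have hmem : m ∈ SS := by
      refine ⟨⟨hmpos.le, min_le_right _ _⟩, ?_⟩
      intro x hx
      rcases eq_or_lt_of_le hx.1 with rfl | hx0
      · exact h0Z
      · exact hfold x hx0
          (lt_of_le_of_lt (hx.2.trans (min_le_left _ _)) (by linarith))
    exact lt_of_lt_of_le hmpos (le_csSup hbdd hmem)
  have hText : T = P.L / 2 := by
    by_contra hne2
    have hTlt : T < P.L / 2 := lt_of_le_of_ne hTle hne2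
    have habZ : T ∈ Z := hIccZ ⟨hT0, le_refl T⟩
    obtain ⟨ε₂, hε₂, hlp1, _⟩ := h.length_preserving _ _ habZ
    set δ := min (min ε₂ T) (P.L/2 - T) with hδdef
    have hδpos : 0 < δ := lt_min (lt_min hε₂ hTpos) (by linarith)
    have hδT : δ ≤ T := (min_le_left _ _).trans (min_le_right _ _)
    have hδε : δ ≤ ε₂ := (min_le_left _ _).trans (min_le_left _ _)
    have hδL : δ ≤ P.L/2 - T := min_le_right _ _
    set B : Set ℝ := {u : ℝ | (p - ((T:ℝ) : AddCircle P.L)) + ((u:ℝ) : AddCircle P.L) ∈ P.V} ∪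
      ({u : ℝ | (p + ((T:ℝ) : AddCircle P.L)) - ((u:ℝ) : AddCircle P.L) ∈ P.V} ∪
       {u : ℝ | (p + ((T:ℝ) : AddCircle P.L)) + ((u:ℝ) : AddCircle P.L) ∈ P.V}) with hBdef
    have hBc : B.Countable :=
      ((vertex_bad_countable_add P _).union
        ((vertex_bad_countable_sub P _).union (vertex_bad_countable_add P _)))
    have hclaim : ∀ u ∈ Set.Ioo (0:ℝ) δ, u ∉ B → (T + u) ∈ Z := by
      intro u hu huB
      have hu1 : 0 < u := hu.1
      have hu2 : u < δ := hu.2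
      have huT : u < T := lt_of_lt_of_le hu2 hδT
      rcases hlp1 u hu1 (lt_of_lt_of_le hu2 hδε) with hcase | hcase
      swap
      · -- the zip continues
        simp only [hZdef, Set.mem_setOf_eq]
        have e1 : p + ((T + u : ℝ) : AddCircle P.L) =
            p + ((T:ℝ) : AddCircle P.L) + ((u:ℝ) : AddCircle P.L) := by
          rw [AddCircle.coe_add]; abel
        have e2 : p - ((T + u : ℝ) : AddCircle P.L) =
            p - ((T:ℝ) : AddCircle P.L) - ((u:ℝ) : AddCircle P.L) := by
          rw [AddCircle.coe_add]; abel
        rw [e1, e2]; exact hcase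
      · -- translation switch: contradiction via three glued points
        exfalso
        set y₁ := p - ((T - u : ℝ) : AddCircle P.L) with hy₁
        set y₂ := p + ((T - u : ℝ) : AddCircle P.L) with hy₂
        set x := p + ((T + u : ℝ) : AddCircle P.L) with hx
        have e1 : p - ((T:ℝ) : AddCircle P.L) + ((u:ℝ) : AddCircle P.L) = y₁ := by
          rw [hy₁, AddCircle.coe_sub]; abel
        have e2 : p + ((T:ℝ) : AddCircle P.L) + ((u:ℝ) : AddCircle P.L) = x := by
          rw [hx, AddCircle.coe_add]; abel
        rw [e1, e2] at hcase
        have rel2 : s.r y₁ x := s.iseqv.symm hcase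
        have hTuZ : T - u ∈ Z := hIccZ ⟨by linarith, by linarith⟩
        have rel1 : s.r y₁ y₂ := by
          simp only [hZdef, Set.mem_setOf_eq] at hTuZ
          exact s.iseqv.symm hTuZ
        have d12 : y₁ ≠ y₂ := by
          intro hc
          rw [hy₁, hy₂] at hc
          have := sub_coe_eq_add_coe P hc
          exact coe_ne_zero_of_lt hL (x := (T-u)+(T-u)) (by linarith) (by linarith) this
        have d1x : y₁ ≠ x := by
          intro hc
          rw [hy₁, hx] at hc
          have := sub_coe_eq_add_coe P hc
          exact coe_ne_zero_of_lt hL (x := (T-u)+(T+u)) (by linarith) (by linarith) this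
        have d2x : y₂ ≠ x := by
          intro hc
          rw [hy₂, hx] at hc
          have := add_coe_inj P hc
          have h2 : (((T + u) - (T - u) : ℝ) : AddCircle P.L) = 0 := by
            rw [show ((T+u)-(T-u) : ℝ) = -((T-u)-(T+u)) by ring, AddCircle.coe_neg, this, neg_zero]
          exact coe_ne_zero_of_lt hL (x := (T+u)-(T-u)) (by linarith) (by linarith) h2
        have e3 : p + ((T:ℝ) : AddCircle P.L) - ((u:ℝ) : AddCircle P.L) = y₂ := by
          rw [hy₂, AddCircle.coe_sub]; abel
        have vy₁ : y₁ ∉ P.V := by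
          intro hv
          exact huB (Or.inl (by rw [Set.mem_setOf_eq, e1]; exact hv))
        have vy₂ : y₂ ∉ P.V := by
          intro hv
          exact huB (Or.inr (Or.inl (by rw [Set.mem_setOf_eq, e3]; exact hv)))
        have vx : x ∉ P.V := by
          intro hv
          exact huB (Or.inr (Or.inr (by rw [Set.mem_setOf_eq, e2]; exact hv)))
        exact three_lemma P s h rel1 rel2 d12 d1x d2x vy₁ vy₂ vx
    have hIcc2 : Set.Icc T (T + δ) ⊆ Z := by
      apply closed_of_cocountable hZclosed (by linarith)
        (B := (fun u : ℝ => T + u) '' B) (hBc.image _)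
      intro x hx hxB
      have hmem : x - T ∈ Set.Ioo (0:ℝ) δ := ⟨by linarith [hx.1], by linarith [hx.2]⟩
      have hnB : x - T ∉ B := fun hc => hxB ⟨x - T, hc, by ring⟩
      have := hclaim (x - T) hmem hnB
      rwa [show T + (x - T) = x by ring] at this
    have hmem2 : min (T + δ) (P.L/2) ∈ SS := by
      refine ⟨⟨le_min (by linarith) (by positivity), min_le_right _ _⟩, ?_⟩
      intro x hx
      rcases le_or_gt x T with hxT | hxT
      · exact hIccZ ⟨hx.1, hxT⟩
      · refine hIcc2 ⟨hxT.le, ?_⟩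
        exact hx.2.trans (min_le_left _ _)
    have hle2 : min (T + δ) (P.L/2) ≤ T := le_csSup hbdd hmem2
    have hlt2 : T < min (T + δ) (P.L/2) := lt_min (by linarith) hTlt
    linarith
  -- wrap around the circle
  have hIccHalf : Set.Icc (0:ℝ) (P.L/2) ⊆ Z := hText ▸ hIccZ
  intro t
  set r := toIcoMod hL 0 t with hrdef
  have hrIco : r ∈ Set.Ico (0:ℝ) P.L := toIcoMod_mem_Ico' hL t
  have hcast : (r : AddCircle P.L) = (t : AddCircle P.L) := by
    have hsub : t - r = toIcoDiv hL 0 t • P.L := self_sub_toIcoMod hL 0 t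
    have h0 : ((t - r : ℝ) : AddCircle P.L) = 0 :=
      (AddCircle.coe_eq_zero_iff P.L).mpr ⟨_, hsub.symm⟩
    rw [AddCircle.coe_sub, sub_eq_zero] at h0
    exact h0.symm
  rcases le_or_gt r (P.L/2) with hcase | hcase
  · have := hIccHalf ⟨hrIco.1, hcase⟩
    simp only [hZdef, Set.mem_setOf_eq] at this
    rwa [hcast] at this
  · have h2 : P.L - r ∈ Z := hIccHalf ⟨by linarith [hrIco.2], by linarith⟩
    simp only [hZdef, Set.mem_setOf_eq] at h2
    have hcast2 : ((P.L - r : ℝ) : AddCircle P.L) = -(t : AddCircle P.L) := by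
      rw [AddCircle.coe_sub, AddCircle.coe_period, hcast]
      abel
    rw [hcast2] at h2
    have h3 : p + -(t : AddCircle P.L) = p - (t : AddCircle P.L) := by abel
    have h4 : p - -(t : AddCircle P.L) = p + (t : AddCircle P.L) := by abel
    rw [h3, h4] at h2
    exact s.iseqv.symm h2

end core2

section core3

variable (P : AbstractPolygon) (s : Setoid (AddCircle P.L))

lemma leaf_class_singleton (h : IsAleksandrovGluing P s) {p : AddCircle P.L}
    (hp : IsLeafClass s p) : glueClass s p = {p} := by
  have hL : (0:ℝ) < P.L := P.Lpos
  apply Set.eq_singleton_iff_unique_mem.mpr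
  refine ⟨s.iseqv.refl p, ?_⟩
  intro q hq
  by_contra hqp
  obtain ⟨ε, hε, hfold⟩ := hp
  obtain ⟨ε₂, hε₂, hlp1, _⟩ := h.length_preserving p q hq
  set B : Set ℝ :=
    ({t : ℝ | ((2*t : ℝ) : AddCircle P.L) = p - q} ∪
     {t : ℝ | ((2*t : ℝ) : AddCircle P.L) = q - p}) ∪
    (({t : ℝ | p + ((t:ℝ) : AddCircle P.L) ∈ P.V} ∪
      {t : ℝ | p - ((t:ℝ) : AddCircle P.L) ∈ P.V}) ∪
     ({t : ℝ | q + ((t:ℝ) : AddCircle P.L) ∈ P.V} ∪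
      {t : ℝ | q - ((t:ℝ) : AddCircle P.L) ∈ P.V})) with hBdef
  have hBc : B.Countable := by
    refine Set.Countable.union (Set.Countable.union ?_ ?_)
      (Set.Countable.union (Set.Countable.union ?_ ?_) (Set.Countable.union ?_ ?_))
    · exact fiber2_countable P.L _
    · exact fiber2_countable P.L _
    · exact vertex_bad_countable_add P _
    · exact vertex_bad_countable_sub P _
    · exact vertex_bad_countable_add P _
    · exact vertex_bad_countable_sub P _
  set m := min (min ε ε₂) (P.L/2) with hm
  have hmpos : 0 < m := lt_min (lt_min hε hε₂) (by positivity)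
  obtain ⟨t, ht, htB⟩ := nonempty_good 0 m hmpos hBc
  have ht1 : 0 < t := ht.1
  have htε : t < ε := lt_of_lt_of_le ht.2 ((min_le_left _ _).trans (min_le_left _ _))
  have htε₂ : t < ε₂ := lt_of_lt_of_le ht.2 ((min_le_left _ _).trans (min_le_right _ _))
  have htL : t < P.L/2 := lt_of_lt_of_le ht.2 (min_le_right _ _)
  have hfoldt : s.r (p + ((t:ℝ) : AddCircle P.L)) (p - ((t:ℝ) : AddCircle P.L)) :=
    hfold t ht1 htε
  have hppm : p + ((t:ℝ) : AddCircle P.L) ≠ p - ((t:ℝ) : AddCircle P.L) := by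
    intro hc
    have := sub_coe_eq_add_coe P hc.symm
    exact coe_ne_zero_of_lt hL (x := t + t) (by linarith) (by linarith) this
  have vp1 : p + ((t:ℝ) : AddCircle P.L) ∉ P.V := by
    intro hv; exact htB (Or.inr (Or.inl (Or.inl hv)))
  have vp2 : p - ((t:ℝ) : AddCircle P.L) ∉ P.V := by
    intro hv; exact htB (Or.inr (Or.inl (Or.inr hv)))
  have vq1 : q + ((t:ℝ) : AddCircle P.L) ∉ P.V := by
    intro hv; exact htB (Or.inr (Or.inr (Or.inl hv)))
  have vq2 : q - ((t:ℝ) : AddCircle P.L) ∉ P.V := by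
    intro hv; exact htB (Or.inr (Or.inr (Or.inr hv)))
  rcases hlp1 t ht1 htε₂ with hcase | hcase
  · -- p + t ~ q + t
    have dxz : p + ((t:ℝ) : AddCircle P.L) ≠ q + ((t:ℝ) : AddCircle P.L) := by
      intro hc
      exact hqp (add_right_cancel hc).symm
    have dyz : p - ((t:ℝ) : AddCircle P.L) ≠ q + ((t:ℝ) : AddCircle P.L) := by
      intro hc
      apply htB
      left; left
      rw [Set.mem_setOf_eq, two_mul, AddCircle.coe_add]
      rw [sub_eq_iff_eq_add] at hc
      rw [hc]; abel
    exact three_lemma P s h hfoldt hcase hppm dxz dyz vp1 vp2 vq1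
  · -- p + t ~ q - t
    have dxz : p + ((t:ℝ) : AddCircle P.L) ≠ q - ((t:ℝ) : AddCircle P.L) := by
      intro hc
      apply htB
      left; right
      rw [Set.mem_setOf_eq, two_mul, AddCircle.coe_add]
      rw [eq_comm, sub_eq_iff_eq_add] at hc
      rw [hc]; abel
    have dyz : p - ((t:ℝ) : AddCircle P.L) ≠ q - ((t:ℝ) : AddCircle P.L) := by
      intro hc
      have hpq : p = q := by rwa [sub_left_inj] at hc
      exact hqp hpq.symm
    exact three_lemma P s h hfoldt hcase hppm dxz dyz vp1 vp2 vq2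

end core3

section core4

variable (P : AbstractPolygon) (s : Setoid (AddCircle P.L))

lemma leaf_double (h : IsAleksandrovGluing P s) {p q : AddCircle P.L}
    (hp : IsLeafClass s p) (hq : IsLeafClass s q) : p + p = q + q := by
  have hL : (0:ℝ) < P.L := P.Lpos
  by_contra hne
  obtain ⟨a, ha⟩ : ∃ a : ℝ, (a : AddCircle P.L) = p - q := Quotient.exists_rep _
  have hrp := leaf_reflect P s h hp
  have hrq := leaf_reflect P s h hq
  set B : Set ℝ :=
    {t : ℝ | ((2*t : ℝ) : AddCircle P.L) = (q + q) - (p + p)} ∪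
    (({t : ℝ | p + ((t:ℝ) : AddCircle P.L) ∈ P.V} ∪
      {t : ℝ | p - ((t:ℝ) : AddCircle P.L) ∈ P.V}) ∪
     {t : ℝ | (q + q - p) - ((t:ℝ) : AddCircle P.L) ∈ P.V}) with hBdef
  have hBc : B.Countable := by
    refine Set.Countable.union ?_ (Set.Countable.union (Set.Countable.union ?_ ?_) ?_)
    · exact fiber2_countable P.L _
    · exact vertex_bad_countable_add P _
    · exact vertex_bad_countable_sub P _
    · exact vertex_bad_countable_sub P _
  obtain ⟨t, ht, htB⟩ := nonempty_good 0 (P.L/2) (by positivity) hBc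
  have ht1 : 0 < t := ht.1
  have htL : t < P.L/2 := ht.2
  -- the three points
  have rel1 : s.r (p + ((t:ℝ) : AddCircle P.L)) (p - ((t:ℝ) : AddCircle P.L)) := hrp t
  have rel2 : s.r (p + ((t:ℝ) : AddCircle P.L)) (q + q - p - ((t:ℝ) : AddCircle P.L)) := by
    have hr := hrq (a + t)
    have e1 : q + ((a + t : ℝ) : AddCircle P.L) = p + ((t:ℝ) : AddCircle P.L) := by
      rw [AddCircle.coe_add, ha]; abel
    have e2 : q - ((a + t : ℝ) : AddCircle P.L) = q + q - p - ((t:ℝ) : AddCircle P.L) := by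
      rw [AddCircle.coe_add, ha]; abel
    rwa [e1, e2] at hr
  have d12 : p + ((t:ℝ) : AddCircle P.L) ≠ p - ((t:ℝ) : AddCircle P.L) := by
    intro hc
    have := sub_coe_eq_add_coe P hc.symm
    exact coe_ne_zero_of_lt hL (x := t + t) (by linarith) (by linarith) this
  have d13 : p + ((t:ℝ) : AddCircle P.L) ≠ q + q - p - ((t:ℝ) : AddCircle P.L) := by
    intro hc
    apply htB
    left
    rw [Set.mem_setOf_eq, two_mul, AddCircle.coe_add]
    rw [eq_comm, sub_eq_iff_eq_add] at hc
    -- hc : q + q - p = p + ↑t + ↑t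
    rw [show (q + q) - (p + p) = (q + q - p) - p by abel, hc]; abel
  have d23 : p - ((t:ℝ) : AddCircle P.L) ≠ q + q - p - ((t:ℝ) : AddCircle P.L) := by
    intro hc
    rw [sub_left_inj] at hc
    rw [eq_sub_iff_add_eq] at hc
    exact hne hc
  have v1 : p + ((t:ℝ) : AddCircle P.L) ∉ P.V := fun hv => htB (Or.inr (Or.inl (Or.inl hv)))
  have v2 : p - ((t:ℝ) : AddCircle P.L) ∉ P.V := fun hv => htB (Or.inr (Or.inl (Or.inr hv)))
  have v3 : q + q - p - ((t:ℝ) : AddCircle P.L) ∉ P.V := fun hv => htB (Or.inr (Or.inr hv))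
  exact three_lemma P s h rel1 rel2 d12 d13 d23 v1 v2 v3

lemma double_eq {x y : AddCircle P.L} (hxy : x + x = y + y) :
    x = y ∨ x = y + ((P.L/2 : ℝ) : AddCircle P.L) := by
  have hL : (0:ℝ) < P.L := P.Lpos
  obtain ⟨r0, hr0⟩ : ∃ r0 : ℝ, (r0 : AddCircle P.L) = x - y := Quotient.exists_rep _
  set r := toIcoMod hL 0 r0 with hrdef
  have hrIco : r ∈ Set.Ico (0:ℝ) P.L := toIcoMod_mem_Ico' hL r0
  have hcast : (r : AddCircle P.L) = x - y := by
    have hsub : r0 - r = toIcoDiv hL 0 r0 • P.L := self_sub_toIcoMod hL 0 r0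
    have h0 : ((r0 - r : ℝ) : AddCircle P.L) = 0 :=
      (AddCircle.coe_eq_zero_iff P.L).mpr ⟨_, hsub.symm⟩
    rw [AddCircle.coe_sub, sub_eq_zero] at h0
    rw [← h0]; exact hr0
  have h2 : ((r + r : ℝ) : AddCircle P.L) = 0 := by
    rw [AddCircle.coe_add, hcast]
    rw [show (x - y) + (x - y) = (x + x) - (y + y) by abel, hxy, sub_self]
  obtain ⟨n, hn⟩ := (AddCircle.coe_eq_zero_iff P.L).mp h2
  rw [zsmul_eq_mul] at hn
  have hn01 : n = 0 ∨ n = 1 := by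
    rcases lt_trichotomy n 0 with hlt | heq | hgt
    · exfalso
      have hn1 : n ≤ -1 := by omega
      have : (n:ℝ) ≤ -1 := by exact_mod_cast hn1
      nlinarith [hrIco.1, hrIco.2]
    · exact Or.inl heq
    · rcases eq_or_lt_of_le (show (1:ℤ) ≤ n by omega) with h1 | h1
      · exact Or.inr h1.symm
      · exfalso
        have hn2 : (2:ℤ) ≤ n := by omega
        have : (2:ℝ) ≤ (n:ℝ) := by exact_mod_cast hn2
        nlinarith [hrIco.1, hrIco.2]
  rcases hn01 with rfl | rfl
  · left
    have hr0' : r = 0 := by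
      simp only [Int.cast_zero, zero_mul] at hn
      linarith
    rw [hr0'] at hcast
    have h00 : ((0:ℝ) : AddCircle P.L) = 0 := by norm_num
    rw [h00, eq_comm, sub_eq_zero] at hcast
    exact hcast
  · right
    have hr2 : r = P.L/2 := by
      simp only [Int.cast_one, one_mul] at hn
      linarith
    rw [hr2, eq_comm, sub_eq_iff_eq_add] at hcast
    exact hcast.trans (add_comm _ _)

end core4

/-- In an Aleksandrov gluing: (a) at most four leaves of the gluing tree
are fold points; (b) each leaf has curvature at least `π` unless it is a polygon vertex
of interior angle greater than `π`; consequently (c) at most four leaves have glued angle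
at least `π`. -/
theorem leaves_of_gluing_tree (P : AbstractPolygon) (s : Setoid (AddCircle P.L))
    (h : IsAleksandrovGluing P s)
    (S : Finset (AddCircle P.L)) (hGB : GaussBonnet P s S) :
    (∀ T : Finset (AddCircle P.L),
        (∀ p ∈ T, IsLeafClass s p ∧ IsFoldPoint P s p) → T.card ≤ 4) ∧
    (∀ p, IsLeafClass s p →
        (p ∈ P.V ∧ π < P.angle p) ∨ π ≤ 2 * π - gluedAngle P s p) ∧
    (∀ T : Finset (AddCircle P.L),
        (∀ p ∈ T, IsLeafClass s p ∧ π ≤ gluedAngle P s p) → T.card ≤ 4) := by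
  have hL : (0:ℝ) < P.L := P.Lpos
  have hcard : ∀ T : Finset (AddCircle P.L),
      (∀ p ∈ T, IsLeafClass s p) → T.card ≤ 4 := by
    intro T hT
    rcases Finset.eq_empty_or_nonempty T with rfl | ⟨p₀, hp₀⟩
    · simp
    · have hsub : T ⊆ ({p₀, p₀ + ((P.L/2 : ℝ) : AddCircle P.L)} : Finset (AddCircle P.L)) := by
        intro q hq
        have hdq : q + q = p₀ + p₀ := leaf_double P s h (hT q hq) (hT p₀ hp₀)
        rcases double_eq P hdq with heq | heq
        · simp [heq]
        · simp [heq]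
      calc T.card ≤ ({p₀, p₀ + ((P.L/2 : ℝ) : AddCircle P.L)} :
            Finset (AddCircle P.L)).card := Finset.card_le_card hsub
        _ ≤ 2 := Finset.card_insert_le _ _ |>.trans (by simp)
        _ ≤ 4 := by norm_num
  refine ⟨fun T hT => hcard T (fun p hp => (hT p hp).1), ?_,
    fun T hT => hcard T (fun p hp => (hT p hp).1)⟩
  intro p hp
  have hclass : glueClass s p = {p} := leaf_class_singleton P s h hp
  have hglue : gluedAngle P s p = P.angle p := by
    rw [gluedAngle, hclass, finsum_mem_singleton]
  by_cases hVa : π < P.angle p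
  · left
    refine ⟨?_, hVa⟩
    by_contra hV
    rw [P.nonvertex_angle p hV] at hVa
    exact lt_irrefl _ hVa
  · right
    push_neg at hVa
    rw [hglue]
    linarith
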